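/- Let Δ be a pure simplicial tree of dimension d on n vertices (every vertex belonging to some facet) which is connected in codimension one. Then the number of facets of Δ equals n − d. -/

import Mathlib

open MvPolynomial

noncomputable section

/-- The depth of `S/I` as a module over `S = K[x_1,…,x_n]` with respect to the graded
maximal ideal `𝔪 = (x_1,…,x_n)`: the supremum of lengths of regular sequences on `S/I`
consisting of elements of `𝔪`. -/
def mDepth (n : ℕ) (K : Type*) [Field K] (I : Ideal (MvPolynomial (Fin n) K)) : ℕ :=
  sSup {k : ℕ | ∃ rs : List (MvPolynomial (Fin n) K), rs.length = k ∧
    (∀ r ∈ rs, r ∈ Ideal.span (Set.range (X : Fin n → MvPolynomial (Fin n) K))) ∧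
    RingTheory.Sequence.IsRegular (MvPolynomial (Fin n) K ⧸ I) rs}

/-- `I` has a constant depth function: `depth S/I^k = depth S/I` for all `k ≥ 1`. -/
def HasConstantDepthFunction (n : ℕ) (K : Type*) [Field K]
    (I : Ideal (MvPolynomial (Fin n) K)) : Prop :=
  ∀ k : ℕ, 1 ≤ k → mDepth n K (I ^ k) = mDepth n K I

/-- The depth of a Noetherian local ring: supremum of lengths of regular sequences
contained in the maximal ideal. -/
def localRingDepth (R : Type*) [CommRing R] [IsLocalRing R] : ℕ :=
  sSup {k : ℕ | ∃ rs : List R, rs.length = k ∧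
    (∀ r ∈ rs, r ∈ IsLocalRing.maximalIdeal R) ∧
    RingTheory.Sequence.IsRegular R rs}

/-- A commutative ring is Cohen–Macaulay if for every prime `p` the localization at `p`
has depth equal to its Krull dimension. -/
def IsCohenMacaulayRing (R : Type*) [CommRing R] : Prop :=
  ∀ (p : Ideal R) [p.IsPrime],
    ringKrullDim (Localization.AtPrime p) =
      (localRingDepth (Localization.AtPrime p) : WithBot ℕ∞)

/-- `I` is a monomial ideal generated by monomials in the variables from `T`. -/
def IsMonomialIdealOn (n : ℕ) (K : Type*) [Field K]
    (I : Ideal (MvPolynomial (Fin n) K)) (T : Set (Fin n)) : Prop :=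
  ∃ A : Set (Fin n →₀ ℕ), (∀ a ∈ A, (a.support : Set (Fin n)) ⊆ T) ∧
    I = Ideal.span ((fun a => (monomial a (1 : K) : MvPolynomial (Fin n) K)) '' A)

/-- `I` is a monomial ideal. -/
def IsMonomialIdeal (n : ℕ) (K : Type*) [Field K]
    (I : Ideal (MvPolynomial (Fin n) K)) : Prop :=
  IsMonomialIdealOn n K I Set.univ

/-- `I` and `J` are monomial ideals generated in disjoint sets of variables. -/
def GeneratedInDisjointVars (n : ℕ) (K : Type*) [Field K]
    (I J : Ideal (MvPolynomial (Fin n) K)) : Prop :=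
  ∃ T₁ T₂ : Set (Fin n), Disjoint T₁ T₂ ∧
    IsMonomialIdealOn n K I T₁ ∧ IsMonomialIdealOn n K J T₂

/-- The ideal of the Rees algebra `R(I)` generated by the image of the graded maximal
ideal `𝔪 ⊆ S`. -/
def fiberIdeal (n : ℕ) (K : Type*) [Field K] (I : Ideal (MvPolynomial (Fin n) K)) :
    Ideal (reesAlgebra I) :=
  Ideal.span ((algebraMap (MvPolynomial (Fin n) K) (reesAlgebra I)) ''
    ((Ideal.span (Set.range (X : Fin n → MvPolynomial (Fin n) K)) :
      Ideal (MvPolynomial (Fin n) K)) : Set (MvPolynomial (Fin n) K)))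

/-- The analytic spread `ℓ(I)`: the Krull dimension of the fiber ring
`R(I)/𝔪R(I)` of the Rees algebra of `I`. -/
def analyticSpread (n : ℕ) (K : Type*) [Field K]
    (I : Ideal (MvPolynomial (Fin n) K)) : ℕ :=
  WithTop.untopD 0 (WithBot.unbotD 0 (ringKrullDim ((reesAlgebra I) ⧸ fiberIdeal n K I)))

/-- The facet ideal of the simplicial complex with facet set `F`. -/
def facetIdeal (n : ℕ) (K : Type*) [Field K] (F : Finset (Finset (Fin n))) :
    Ideal (MvPolynomial (Fin n) K) :=
  Ideal.span ((fun f : Finset (Fin n) => ∏ i ∈ f, (X i : MvPolynomial (Fin n) K)) '' F)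

/-- `f` is a leaf of the simplicial complex with facet set `F`: either `f` is the only
facet, or there is a facet `g ≠ f` (a branch of `f`) with `f ∩ h ⊆ f ∩ g` for every
other facet `h`. -/
def IsLeafOf (n : ℕ) (F : Finset (Finset (Fin n))) (f : Finset (Fin n)) : Prop :=
  F = {f} ∨ ∃ g ∈ F, g ≠ f ∧ ∀ h ∈ F, h ≠ f → f ∩ h ⊆ f ∩ g

/-- The complex with facet set `F` is a simplicial forest: every subcollection of the
facets (viewed as facets of a subcomplex) has a leaf. -/
def IsSimplicialForest (n : ℕ) (F : Finset (Finset (Fin n))) : Prop :=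
  ∀ F' ⊆ F, F'.Nonempty → ∃ f ∈ F', IsLeafOf n F' f

/-- The complex with facet set `F` is connected: any two facets are joined by a chain
of facets with consecutive nonempty intersections. -/
def FacetConnected (n : ℕ) (F : Finset (Finset (Fin n))) : Prop :=
  ∀ f ∈ F, ∀ g ∈ F,
    Relation.ReflTransGen (fun a b => a ∈ F ∧ b ∈ F ∧ (a ∩ b).Nonempty) f g

/-- The pure `d`-dimensional complex with facet set `F` is connected in codimension one:
any two facets are joined by a chain of facets in which consecutive facets intersect in
codimension one (i.e. in `d` vertices, the facets having `d+1` vertices each). -/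
def ConnectedInCodimOne (n d : ℕ) (F : Finset (Finset (Fin n))) : Prop :=
  ∀ f ∈ F, ∀ g ∈ F,
    Relation.ReflTransGen (fun a b => a ∈ F ∧ b ∈ F ∧ (a ∩ b).card = d) f g

/-!
Let `f` be a leaf of the tree with branch `g`. Connectivity in codimension one forces some facet
to meet `f` in `d` vertices, and every other facet meets `f` inside `f ∩ g`, so `#(f ∩ g) = d`.
Hence `f` meets the rest of the complex exactly in `f ∩ g` and contributes one new vertex;
and removing `f` keeps the complex connected in codimension one, since a step through `f`
can be rerouted through `g`. Induction on the number of facets gives `n = #F + d`.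
-/

open Finset Relation

section

variable {α : Type*} [DecidableEq α] {d : ℕ}

theorem card_inter_le_of_ne {f g : Finset α} (hf : #f = d + 1) (hg : #g = d + 1)
    (hne : f ≠ g) : #(f ∩ g) ≤ d := by
  by_contra! h
  have hff : f ∩ g = f := eq_of_subset_of_card_le inter_subset_left (by omega)
  have hgg : f ∩ g = g := eq_of_subset_of_card_le inter_subset_right (by omega)
  exact hne (hff.symm.trans hgg)

def IsBranch (F : Finset (Finset α)) (f g : Finset α) : Prop :=
  g ∈ F ∧ g ≠ f ∧ ∀ h ∈ F, h ≠ f → f ∩ h ⊆ f ∩ g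

theorem card_sup_insert_add_card_inter {F : Finset (Finset α)} {f g : Finset α} (hg : g ∈ F)
    (hsub : ∀ h ∈ F, f ∩ h ⊆ f ∩ g) :
    #((insert f F).sup id) + #(f ∩ g) = #(F.sup id) + #f := by
  have hinter : f ∩ F.sup id = f ∩ g :=
    (sup_inf_distrib_left F id f).trans
      (le_antisymm (Finset.sup_le hsub) (le_sup (f := fun h => f ∩ h) hg))
  rw [sup_insert, id, sup_eq_union, ← hinter, card_union_add_card_inter, add_comm]

end

section

variable {n d : ℕ} {F : Finset (Finset (Fin n))} {f g : Finset (Fin n)}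

theorem IsSimplicialForest.mono {F' : Finset (Finset (Fin n))} (hF : IsSimplicialForest n F)
    (hF' : F' ⊆ F) : IsSimplicialForest n F' :=
  fun G hG hGne => hF G (hG.trans hF') hGne

theorem IsBranch.card_inter_eq (hpure : ∀ f ∈ F, #f = d + 1) (hcodim : ConnectedInCodimOne n d F)
    (hf : f ∈ F) (hb : IsBranch F f g) : #(f ∩ g) = d := by
  obtain ⟨hg, hgf, hsub⟩ := hb
  rcases (hcodim f hf g hg).cases_head with rfl | ⟨b, ⟨-, hb, hfb⟩, -⟩
  · exact absurd rfl hgf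
  · have hbf : b ≠ f := by
      rintro rfl
      simp [hpure b hb] at hfb
    have := card_le_card (hsub b hb hbf)
    have := card_inter_le_of_ne (hpure f hf) (hpure g hg) hgf.symm
    omega

theorem IsBranch.reflTransGen_erase (hpure : ∀ f ∈ F, #f = d + 1) (hb : IsBranch F f g)
    (hfg : #(f ∩ g) = d) {a : Finset (Fin n)} (ha : a ∈ F) (haf : a ≠ f) (hfa : #(f ∩ a) = d) :
    ReflTransGen (fun x y => x ∈ F.erase f ∧ y ∈ F.erase f ∧ #(x ∩ y) = d) g a := by
  obtain ⟨hg, hgf, hsub⟩ := hb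
  have heq : f ∩ a = f ∩ g := eq_of_subset_of_card_le (hsub a ha haf) (by omega)
  have hga : d ≤ #(g ∩ a) := hfg ▸ card_le_card
    (subset_inter inter_subset_right (by rw [← heq]; exact inter_subset_right))
  by_cases hag : g = a
  · subst hag
    exact .refl
  · exact .single ⟨mem_erase.2 ⟨hgf, hg⟩, mem_erase.2 ⟨haf, ha⟩,
      le_antisymm (card_inter_le_of_ne (hpure g hg) (hpure a ha) hag) hga⟩

theorem ConnectedInCodimOne.erase_of_isBranch (hpure : ∀ f ∈ F, #f = d + 1)
    (hcodim : ConnectedInCodimOne n d F) (hb : IsBranch F f g) (hfg : #(f ∩ g) = d) :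
    ConnectedInCodimOne n d (F.erase f) := by
  have reach : ∀ c, ReflTransGen (fun x y => x ∈ F ∧ y ∈ F ∧ #(x ∩ y) = d) g c → c ≠ f →
      ReflTransGen (fun x y => x ∈ F.erase f ∧ y ∈ F.erase f ∧ #(x ∩ y) = d) g c := by
    intro c hc
    induction hc with
    | refl => exact fun _ => .refl
    | @tail b c _ hstep ih =>
      intro hcf
      obtain ⟨hbF, hcF, hbc⟩ := hstep
      by_cases hbf : b = f
      · subst hbf
        exact hb.reflTransGen_erase hpure hfg hcF hcf hbc
      · exact (ih hbf).tail ⟨mem_erase.2 ⟨hbf, hbF⟩, mem_erase.2 ⟨hcf, hcF⟩, hbc⟩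
  intro x hx y hy
  have hgx := reach x (hcodim g hb.1 x (mem_of_mem_erase hx)) (ne_of_mem_erase hx)
  have hgy := reach y (hcodim g hb.1 y (mem_of_mem_erase hy)) (ne_of_mem_erase hy)
  refine ReflTransGen.trans ?_ hgy
  exact ReflTransGen.mono (fun a b ⟨ha, hb, hab⟩ => ⟨hb, ha, by rwa [inter_comm]⟩) _ _
    (reflTransGen_swap.2 hgx)

theorem card_sup_id_eq_card_add (hne : F.Nonempty) (hpure : ∀ f ∈ F, #f = d + 1)
    (hforest : IsSimplicialForest n F) (hcodim : ConnectedInCodimOne n d F) :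
    #(F.sup id) = #F + d := by
  induction F using Finset.strongInduction with
  | H F ih =>
  obtain ⟨f, hf, rfl | ⟨g, hb⟩⟩ := hforest F Subset.rfl hne
  · simp [hpure f (mem_singleton_self f), add_comm]
  replace hb : IsBranch F f g := hb
  have hfg := hb.card_inter_eq hpure hcodim hf
  have hg' : g ∈ F.erase f := mem_erase.2 ⟨hb.2.1, hb.1⟩
  have hF' := ih _ (erase_ssubset hf) ⟨g, hg'⟩ (fun h hh => hpure h (mem_of_mem_erase hh))
    (hforest.mono (erase_subset f F)) (hcodim.erase_of_isBranch hpure hb hfg)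
  have hcount := card_sup_insert_add_card_inter hg'
    (fun h hh => hb.2.2 h (mem_of_mem_erase hh) (ne_of_mem_erase hh))
  rw [insert_erase hf] at hcount
  have := card_erase_add_one hf
  have := hpure f hf
  omega

end

theorem tree_card_facets_general (n d : ℕ) (F : Finset (Finset (Fin n)))
    (hpure : ∀ f ∈ F, f.card = d + 1)
    (hvert : ∀ i : Fin n, ∃ f ∈ F, i ∈ f)
    (hforest : IsSimplicialForest n F)
    (hcodim : ConnectedInCodimOne n d F) :
    F.card = n - d := by
  rcases F.eq_empty_or_nonempty with rfl | hne
  · obtain rfl : n = 0 := by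
      by_contra hn
      obtain ⟨f, hf, -⟩ := hvert ⟨0, Nat.pos_of_ne_zero hn⟩
      exact notMem_empty f hf
    simp
  · have hsup : F.sup id = univ := eq_univ_of_forall fun i =>
      let ⟨f, hf, hi⟩ := hvert i
      mem_sup.2 ⟨f, hf, hi⟩
    have := card_sup_id_eq_card_add hne hpure hforest hcodim
    rw [hsup, card_univ, Fintype.card_fin] at this
    omega

/-- Let `Δ` be a pure simplicial tree of dimension `d` on `n` vertices
(every vertex belonging to some facet) which is connected in codimension one. Then the
number of facets of `Δ` equals `n - d`. -/
theorem tree_card_facets (n d : ℕ) (F : Finset (Finset (Fin n)))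
    (hpure : ∀ f ∈ F, f.card = d + 1)
    (hvert : ∀ i : Fin n, ∃ f ∈ F, i ∈ f)
    (hforest : IsSimplicialForest n F)
    (hconn : FacetConnected n F)
    (hcodim : ConnectedInCodimOne n d F) :
    F.card = n - d :=
  tree_card_facets_general n d F hpure hvert hforest hcodim

end
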